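/- arXiv:2105.14697 — 3 statements merged into one kernel-verified Lean document; each statement's English description precedes it below -/
import Mathlib

section
/- There exists no sequence x : ℕ → ℕ of the form x(n) = vᵀ Mⁿ w (for some dimension d, matrix M with natural number entries, and vectors v, w with natural number entries) satisfying x(8n+1) > x(9n+2) for all n. -/
/-!
Call a state `k` of a `d × d` matrix `M` over `ℕ` recurrent if a closed walk of length `c ≤ d`
passes through `k`; then `c ∣ d!`, so `(M ^ d!) k k ≠ 0`. By pigeonhole every walk of length `d`
meets a recurrent state, so splitting walks at their first recurrent state writes `M ^ k`, for
`k ≥ d`, as a sum of terms `(D M) ^ τ E M ^ (k - τ)`, where `D` and `E` project onto the transient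
and the recurrent states. As `E ≤ E M ^ d!` entrywise, `M ^ k ≤ M ^ (k + d!)` entrywise, hence
`x (k) ≤ x (k + j d!)` for `k ≥ d`. This fails for `k = 8n + 1` and `k + j d! = 9n + 2` when
`n + 1 = (d + 1) d!`.
-/

open Finset

theorem pow_eq_sum_add_of_add_eq_one {R : Type*} [Semiring R] {D E : R} (hDE : D + E = 1)
    (M : R) (k : ℕ) :
    M ^ k = ∑ τ ∈ range k, (D * M) ^ τ * E * M ^ (k - τ) + (D * M) ^ k := by
  induction k with
  | zero => simp
  | succ k ih =>
    have hsplit : M ^ (k + 1) = D * M * M ^ k + E * M ^ (k + 1) := by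
      rw [mul_assoc, ← pow_succ', ← add_mul, hDE, one_mul]
    rw [hsplit, ih, mul_add, mul_sum, sum_range_succ', pow_succ' (D * M) k]
    simp only [pow_zero, one_mul, Nat.sub_zero, Nat.add_sub_add_right, pow_succ', mul_assoc]
    abel

namespace Matrix

variable {n : Type*} [Fintype n] [DecidableEq n]

theorem exists_walk_of_pow_apply_ne_zero (A : Matrix n n ℕ) {m : ℕ} {i j : n}
    (h : (A ^ m) i j ≠ 0) :
    ∃ g : ℕ → n, g 0 = i ∧ g m = j ∧ ∀ t < m, A (g t) (g (t + 1)) ≠ 0 := by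
  induction m generalizing i with
  | zero =>
    obtain rfl : i = j := by_contra fun hij => h (by simp [one_apply_ne hij])
    exact ⟨fun _ => i, rfl, rfl, by omega⟩
  | succ m ih =>
    rw [pow_succ', mul_apply] at h
    obtain ⟨k, -, hk⟩ := exists_ne_zero_of_sum_ne_zero h
    obtain ⟨g, rfl, hgm, hg⟩ := ih (right_ne_zero_of_mul hk)
    refine ⟨fun | 0 => i | t + 1 => g t, rfl, hgm, fun t ht => ?_⟩
    rcases t with _ | t
    · exact left_ne_zero_of_mul hk
    · exact hg t (by omega)

theorem pow_apply_ne_zero_of_walk (A : Matrix n n ℕ) {m : ℕ} (g : ℕ → n)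
    (hg : ∀ t < m, A (g t) (g (t + 1)) ≠ 0) : (A ^ m) (g 0) (g m) ≠ 0 := by
  induction m with
  | zero => simp
  | succ m ih =>
    rw [pow_succ, mul_apply, Ne, sum_eq_zero_iff, not_forall]
    exact ⟨g m, by simpa using mul_ne_zero (ih fun t ht => hg t (by omega)) (hg m (by omega))⟩

theorem mul_apply_le_mul_apply {l m o : Type*} [Fintype m] {A A' : Matrix l m ℕ}
    {B B' : Matrix m o ℕ} (hA : ∀ i j, A i j ≤ A' i j) (hB : ∀ i j, B i j ≤ B' i j) (i : l)
    (j : o) : (A * B) i j ≤ (A' * B') i j := by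
  simp only [mul_apply]
  gcongr with k
  exacts [hA i k, hB k j]

theorem dotProduct_mulVec_le_of_apply_le {l m : Type*} [Fintype l] [Fintype m]
    {A B : Matrix l m ℕ} (v : l → ℕ) (w : m → ℕ) (h : ∀ i j, A i j ≤ B i j) :
    v ⬝ᵥ A *ᵥ w ≤ v ⬝ᵥ B *ᵥ w := by
  simp only [dotProduct, mulVec]
  gcongr with i _ j
  exact h i j

variable (M : Matrix n n ℕ)

def IsRecurrent (k : n) : Prop :=
  ∃ c, 0 < c ∧ c ≤ Fintype.card n ∧ (M ^ c) k k ≠ 0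

theorem IsRecurrent.pow_factorial_apply_ne_zero {M : Matrix n n ℕ} {k : n}
    (hk : IsRecurrent M k) :
    (M ^ (Fintype.card n).factorial) k k ≠ 0 := by
  obtain ⟨c, hc, hcn, hck⟩ := hk
  obtain ⟨m, hm⟩ := Nat.dvd_factorial hc hcn
  rw [hm, pow_mul]
  exact pow_apply_ne_zero_of_walk (M ^ c) (fun _ => k) fun _ _ => hck

theorem exists_isRecurrent_of_walk (g : ℕ → n)
    (hg : ∀ t < Fintype.card n, M (g t) (g (t + 1)) ≠ 0) :
    ∃ t < Fintype.card n, IsRecurrent M (g t) := by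
  obtain ⟨a, b, hab, hgab⟩ := Fintype.exists_ne_map_eq_of_card_lt
    (fun t : Fin (Fintype.card n + 1) => g t) (by simp)
  wlog hlt : a < b generalizing a b
  · exact this b a hab.symm hgab.symm (lt_of_le_of_ne (not_lt.mp hlt) hab.symm)
  have hcycle := pow_apply_ne_zero_of_walk M (m := b - a) (fun t => g (a + t))
    fun t ht => hg (a + t) (by omega)
  refine ⟨a, by omega, b - a, by omega, by omega, ?_⟩
  simpa [show (a : ℕ) + (b - a) = b by omega, ← hgab] using hcycle

open Classical in
noncomputable def recurrentProj : Matrix n n ℕ :=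
  diagonal fun k => if IsRecurrent M k then 1 else 0

open Classical in
noncomputable def transientProj : Matrix n n ℕ :=
  diagonal fun k => if IsRecurrent M k then 0 else 1

theorem transientProj_add_recurrentProj : transientProj M + recurrentProj M = 1 := by
  rw [transientProj, recurrentProj, diagonal_add, ← diagonal_one]
  congr 1
  ext k
  split_ifs <;> rfl

theorem transientProj_mul_pow_card_eq_zero : (transientProj M * M) ^ Fintype.card n = 0 := by
  ext i j
  by_contra h
  obtain ⟨g, -, -, hg⟩ := exists_walk_of_pow_apply_ne_zero _ h
  have hedge : ∀ t < Fintype.card n, ¬IsRecurrent M (g t) ∧ M (g t) (g (t + 1)) ≠ 0 := by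
    intro t ht
    have := hg t ht
    rw [transientProj, diagonal_mul] at this
    split_ifs at this with hrec <;> simp_all
  obtain ⟨t, ht, hrec⟩ := exists_isRecurrent_of_walk M g fun t ht => (hedge t ht).2
  exact (hedge t ht).1 hrec

theorem recurrentProj_apply_le_mul_pow_factorial_apply (i j : n) :
    recurrentProj M i j ≤ (recurrentProj M * M ^ (Fintype.card n).factorial) i j := by
  rw [recurrentProj, diagonal_mul, diagonal_apply]
  split_ifs with hij hrec <;> try exact Nat.zero_le _
  subst hij
  simpa [Nat.one_le_iff_ne_zero] using hrec.pow_factorial_apply_ne_zero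

theorem pow_apply_le_pow_add_factorial_apply {k : ℕ} (hk : Fintype.card n ≤ k) (i j : n) :
    (M ^ k) i j ≤ (M ^ (k + (Fintype.card n).factorial)) i j := by
  set p := (Fintype.card n).factorial
  set D := transientProj M
  set E := recurrentProj M
  have hDE : D + E = 1 := transientProj_add_recurrentProj M
  have hMk : M ^ k = ∑ τ ∈ range k, (D * M) ^ τ * E * M ^ (k - τ) := by
    rw [pow_eq_sum_add_of_add_eq_one hDE M k,
      pow_eq_zero_of_le hk (transientProj_mul_pow_card_eq_zero M), add_zero]
  calc (M ^ k) i j = ∑ τ ∈ range k, ((D * M) ^ τ * E * M ^ (k - τ)) i j := by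
        rw [hMk, sum_apply]
    _ ≤ ∑ τ ∈ range k, ((D * M) ^ τ * (E * M ^ p) * M ^ (k - τ)) i j := by
        gcongr with τ
        refine mul_apply_le_mul_apply (fun _ _ => ?_) (fun _ _ => le_rfl) _ _
        exact mul_apply_le_mul_apply (fun _ _ => le_rfl)
          (recurrentProj_apply_le_mul_pow_factorial_apply M) _ _
    _ = ∑ τ ∈ range k, ((D * M) ^ τ * E * M ^ (k + p - τ)) i j := by
        refine sum_congr rfl fun τ hτ => ?_
        rw [show k + p - τ = p + (k - τ) by grind, pow_add, mul_assoc _ E, mul_assoc, mul_assoc]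
    _ ≤ ∑ τ ∈ range (k + p), ((D * M) ^ τ * E * M ^ (k + p - τ)) i j :=
        sum_le_sum_of_subset (range_subset_range.mpr (Nat.le_add_right k p))
    _ ≤ (M ^ (k + p)) i j := by
        rw [pow_eq_sum_add_of_add_eq_one hDE M (k + p), add_apply, sum_apply]
        exact Nat.le_add_right _ _

theorem pow_apply_le_pow_add_mul_factorial_apply {k : ℕ} (hk : Fintype.card n ≤ k) (m : ℕ)
    (i j : n) : (M ^ k) i j ≤ (M ^ (k + m * (Fintype.card n).factorial)) i j := by
  induction m with
  | zero => simp
  | succ m ih =>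
    rw [add_one_mul, ← add_assoc]
    exact ih.trans (pow_apply_le_pow_add_factorial_apply M (by omega) i j)

end Matrix

theorem stmt_1 :
    ¬ ∃ (d : ℕ) (M : Matrix (Fin d) (Fin d) ℕ) (v w : Fin d → ℕ),
      ∀ n : ℕ,
        dotProduct v ((M ^ (8 * n + 1)).mulVec w) >
          dotProduct v ((M ^ (9 * n + 2)).mulVec w) := by
  rintro ⟨d, M, v, w, h⟩
  set p := d.factorial
  have hp : 0 < p := Nat.factorial_pos d
  have hpd : d + 1 ≤ (d + 1) * p := Nat.le_mul_of_pos_right _ hp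
  set n := (d + 1) * p - 1
  have hmono := Matrix.dotProduct_mulVec_le_of_apply_le v w
    (Matrix.pow_apply_le_pow_add_mul_factorial_apply M (k := 8 * n + 1)
      (by rw [Fintype.card_fin]; omega) (d + 1))
  rw [Fintype.card_fin, show 8 * n + 1 + (d + 1) * p = 9 * n + 2 by omega] at hmono
  exact (h n).not_ge hmono
end

section
/- Define F : ℕ → ℕ by F(n) = (n-1)/3 if n ≡ 1 (mod 3); F(n) = n/2 if n ≡ 0 or 2 (mod 6); F(n) = (3n+1)/2 if n ≡ 3 or 5 (mod 6). Then for all n ∈ ℕ, the trajectory of n under F eventually reaches 1 or 0; equivalently, for all n ≥ 1 there exists k such that F^k(n) = 1. -/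
/-- Farkas' variant of the Collatz function. -/
def F (n : ℕ) : ℕ :=
  if n % 3 = 1 then (n - 1) / 3
  else if n % 2 = 0 then n / 2
  else (3 * n + 1) / 2

lemma chain_up (m : ℕ) (hm : m % 2 = 1) :
    ∀ i j : ℕ, 1 ≤ j → F^[i] (3 ^ j * 2 ^ i * m - 1) = 3 ^ (j + i) * m - 1 := by
  intro i
  induction i with
  | zero => intro j hj; simp
  | succ i ih =>
    intro j hj
    obtain ⟨j', rfl⟩ : ∃ j', j = j' + 1 := ⟨j - 1, by omega⟩
    have hm0 : 0 < m := by omega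
    have hA : 0 < 3 ^ j' * 2 ^ i * m :=
      Nat.mul_pos (Nat.mul_pos (pow_pos (by norm_num) _) (pow_pos (by norm_num) _)) hm0
    set A := 3 ^ j' * 2 ^ i * m with hAdef
    have h6 : 3 ^ (j' + 1) * 2 ^ (i + 1) * m = 6 * A := by rw [hAdef]; ring
    have h9 : 3 ^ (j' + 2) * 2 ^ i * m = 9 * A := by rw [hAdef]; ring
    have hF : F (6 * A - 1) = 9 * A - 1 := by
      have h3 : (6 * A - 1) % 3 = 2 := by omega
      have h2 : (6 * A - 1) % 2 = 1 := by omega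
      simp only [F, h3, h2]
      norm_num
      omega
    rw [h6, Function.iterate_succ_apply, hF, ← h9, ih (j' + 2) (by omega),
      show j' + 2 + i = j' + 1 + (i + 1) from by omega]

lemma chain_down (m : ℕ) (hm : m % 2 = 1) :
    ∀ j : ℕ, F^[j] ((3 ^ (j + 1) * m - 1) / 2) = (3 * m - 1) / 2 := by
  intro j
  induction j with
  | zero => norm_num
  | succ j ih =>
    have hB2 : 3 ^ j * m % 2 = 1 := by
      have h1 : 3 ^ j % 2 = 1 := by rw [Nat.pow_mod]; simp
      rw [Nat.mul_mod, h1, hm]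
    obtain ⟨c, hc⟩ : ∃ c, 3 ^ j * m = 2 * c + 1 := ⟨3 ^ j * m / 2, by omega⟩
    have h9 : 3 ^ (j + 1 + 1) * m = 18 * c + 9 := by
      have : 3 ^ (j + 1 + 1) * m = 9 * (3 ^ j * m) := by ring
      omega
    have h3 : 3 ^ (j + 1) * m = 6 * c + 3 := by
      have : 3 ^ (j + 1) * m = 3 * (3 ^ j * m) := by ring
      omega
    have hin : (3 ^ (j + 1 + 1) * m - 1) / 2 = 9 * c + 4 := by omega
    have hF : F (9 * c + 4) = (3 ^ (j + 1) * m - 1) / 2 := by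
      have hmod : (9 * c + 4) % 3 = 1 := by omega
      simp only [F, hmod, if_true]
      omega
    rw [hin, Function.iterate_succ_apply, hF, ih]

lemma hard_case (a m n : ℕ) (ha : 1 ≤ a) (hm : m % 2 = 1)
    (hn : n + 1 = 2 ^ a * m) (h3 : n % 3 ≠ 1) :
    F^[2 * a] n = (3 * m - 1) / 2 := by
  obtain ⟨a', rfl⟩ : ∃ a', a = a' + 1 := ⟨a - 1, by omega⟩
  have hm0 : 0 < m := by omega
  have hP : 0 < 2 ^ a' * m := Nat.mul_pos (pow_pos (by norm_num) _) hm0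
  set P := 2 ^ a' * m with hPdef
  have h2P : n + 1 = 2 * P := by rw [hn, hPdef]; ring
  -- step 1 : F n = 3 * P - 1
  have hF1 : F n = 3 ^ 1 * 2 ^ a' * m - 1 := by
    have h2 : n % 2 = 1 := by omega
    have hF : F n = (3 * n + 1) / 2 := by simp only [F, h2]; simp [h3]
    have : 3 ^ 1 * 2 ^ a' * m = 3 * P := by rw [hPdef]; ring
    omega
  -- steps 2..(a'+1) : chain up
  have hup := chain_up m hm a' 1 (le_refl 1)
  -- the peak value x = 3^(1+a') * m - 1
  have hQ : 0 < 3 ^ (1 + a') * m := Nat.mul_pos (pow_pos (by norm_num) _) hm0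
  have hQ2 : 3 ^ (1 + a') * m % 2 = 1 := by
    have h1 : 3 ^ (1 + a') % 2 = 1 := by rw [Nat.pow_mod]; simp
    rw [Nat.mul_mod, h1, hm]
  have hQ3 : 3 ^ (1 + a') * m % 3 = 0 := by
    have : 3 ^ (1 + a') * m = 3 * (3 ^ a' * m) := by ring
    omega
  have hFx : F (3 ^ (1 + a') * m - 1) = (3 ^ (a' + 1) * m - 1) / 2 := by
    have e1 : (3 ^ (1 + a') * m - 1) % 3 = 2 := by omega
    have e2 : (3 ^ (1 + a') * m - 1) % 2 = 0 := by omega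
    simp only [F, e1, e2]
    norm_num
    rw [show 1 + a' = a' + 1 from by omega]
  -- final cascade down
  have hdown := chain_down m hm a'
  have hsplit : 2 * (a' + 1) = a' + (1 + (a' + 1)) := by omega
  rw [hsplit, Function.iterate_add_apply, Function.iterate_add_apply,
    Function.iterate_one, Function.iterate_succ_apply, hF1, hup, hFx, hdown]

theorem stmt_9 : ∀ n : ℕ, 1 ≤ n → ∃ k : ℕ, F^[k] n = 1 := by
  intro n
  induction n using Nat.strong_induction_on with
  | _ n ih =>
    intro hn
    rcases eq_or_lt_of_le hn with h1 | h2
    · exact ⟨0, by simp [← h1]⟩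
    by_cases h3 : n % 3 = 1
    · have hF : F n = (n - 1) / 3 := by simp [F, h3]
      have hlt : (n - 1) / 3 < n := by omega
      have hge : 1 ≤ (n - 1) / 3 := by omega
      obtain ⟨k, hk⟩ := ih _ hlt hge
      exact ⟨k + 1, by rw [Function.iterate_add_apply, Function.iterate_one, hF, hk]⟩
    by_cases h2' : n % 2 = 0
    · have hF : F n = n / 2 := by simp [F, h3, h2']
      have hlt : n / 2 < n := by omega
      have hge : 1 ≤ n / 2 := by omega
      obtain ⟨k, hk⟩ := ih _ hlt hge
      exact ⟨k + 1, by rw [Function.iterate_add_apply, Function.iterate_one, hF, hk]⟩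
    · obtain ⟨a, m, hmo, hnm⟩ := Nat.exists_eq_two_pow_mul_odd (show n + 1 ≠ 0 by omega)
      have hm2 : m % 2 = 1 := Nat.odd_iff.mp hmo
      have ha : 1 ≤ a := by
        rcases Nat.eq_zero_or_pos a with h | h
        · exfalso; rw [h] at hnm; simp at hnm; omega
        · exact h
      have hiter := hard_case a m n ha hm2 hnm h3
      have hb : 2 * m ≤ n + 1 := by
        have h2a : 2 ≤ 2 ^ a := by
          calc 2 = 2 ^ 1 := by norm_num
          _ ≤ 2 ^ a := Nat.pow_le_pow_right (by norm_num) ha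
        calc 2 * m ≤ 2 ^ a * m := Nat.mul_le_mul_right m h2a
        _ = n + 1 := hnm.symm
      have hlt : (3 * m - 1) / 2 < n := by omega
      have hge : 1 ≤ (3 * m - 1) / 2 := by omega
      obtain ⟨k, hk⟩ := ih _ hlt hge
      exact ⟨k + 2 * a, by rw [Function.iterate_add_apply, hiter, hk]⟩
end

section
/- Every Collatz trajectory under C that never visits a number congruent to 6 mod 8 is convergent (reaches 1). Equivalently: if n ≥ 1 and for all k, C^k(n) ≢ 6 (mod 8), then there exists k with C^k(n) = 1. -/
set_option maxHeartbeats 1000000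


/-- The Collatz function. -/
def C (n : ℕ) : ℕ := if n % 2 = 0 then n / 2 else 3 * n + 1

private lemma Cpos : ∀ {n : ℕ}, 1 ≤ n → 1 ≤ C n := by
  intro n hn; unfold C; split <;> omega

private lemma Cpos_iter (k : ℕ) {n : ℕ} (hn : 1 ≤ n) : 1 ≤ C^[k] n := by
  induction k generalizing n with
  | zero => exact hn
  | succ k ih => rw [Function.iterate_succ_apply]; exact ih (Cpos hn)

private lemma key (n : ℕ) (hn : 2 ≤ n) (h : ∀ k, C^[k] n % 8 ≠ 6) :
    ∃ j, 0 < j ∧ C^[j] n < n := by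
  by_cases h2 : n % 2 = 0
  · refine ⟨1, one_pos, ?_⟩
    have e : C n = n / 2 := by unfold C; split <;> omega
    show C n < n
    omega
  · rcases (by omega : n % 8 = 1 ∨ n % 8 = 3 ∨ n % 8 = 5 ∨ n % 8 = 7) with h8 | h8 | h8 | h8
    · obtain ⟨a, rfl⟩ : ∃ a, n = 8*a+1 := ⟨n/8, by omega⟩
      have e1 : C (8*a+1) = 24*a+4 := by unfold C; split <;> omega
      have e2 : C (24*a+4) = 12*a+2 := by unfold C; split <;> omega
      have e3 : C (12*a+2) = 6*a+1 := by unfold C; split <;> omega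
      refine ⟨3, by norm_num, ?_⟩
      show C (C (C (8*a+1))) < 8*a+1
      rw [e1, e2, e3]; omega
    · rcases (by omega : n % 16 = 3 ∨ n % 16 = 11) with h16 | h16
      · obtain ⟨b, rfl⟩ : ∃ b, n = 16*b+3 := ⟨n/16, by omega⟩
        have e1 : C (16*b+3) = 48*b+10 := by unfold C; split <;> omega
        have e2 : C (48*b+10) = 24*b+5 := by unfold C; split <;> omega
        have e3 : C (24*b+5) = 72*b+16 := by unfold C; split <;> omega
        have e4 : C (72*b+16) = 36*b+8 := by unfold C; split <;> omega
        have e5 : C (36*b+8) = 18*b+4 := by unfold C; split <;> omega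
        have e6 : C (18*b+4) = 9*b+2 := by unfold C; split <;> omega
        refine ⟨6, by norm_num, ?_⟩
        show C (C (C (C (C (C (16*b+3)))))) < 16*b+3
        rw [e1, e2, e3, e4, e5, e6]; omega
      · rcases (by omega : n % 32 = 11 ∨ n % 32 = 27) with h32 | h32
        · obtain ⟨c, rfl⟩ : ∃ c, n = 32*c+11 := ⟨n/32, by omega⟩
          have e1 : C (32*c+11) = 96*c+34 := by unfold C; split <;> omega
          have e2 : C (96*c+34) = 48*c+17 := by unfold C; split <;> omega
          have e3 : C (48*c+17) = 144*c+52 := by unfold C; split <;> omega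
          have e4 : C (144*c+52) = 72*c+26 := by unfold C; split <;> omega
          have e5 : C (72*c+26) = 36*c+13 := by unfold C; split <;> omega
          have e6 : C (36*c+13) = 108*c+40 := by unfold C; split <;> omega
          have e7 : C (108*c+40) = 54*c+20 := by unfold C; split <;> omega
          have e8 : C (54*c+20) = 27*c+10 := by unfold C; split <;> omega
          refine ⟨8, by norm_num, ?_⟩
          show C (C (C (C (C (C (C (C (32*c+11)))))))) < 32*c+11
          rw [e1, e2, e3, e4, e5, e6, e7, e8]; omega
        · exfalso
          obtain ⟨c, rfl⟩ : ∃ c, n = 32*c+27 := ⟨n/32, by omega⟩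
          have e1 : C (32*c+27) = 96*c+82 := by unfold C; split <;> omega
          have e2 : C (96*c+82) = 48*c+41 := by unfold C; split <;> omega
          have e3 : C (48*c+41) = 144*c+124 := by unfold C; split <;> omega
          have e4 : C (144*c+124) = 72*c+62 := by unfold C; split <;> omega
          have := h 4
          rw [show C^[4] (32*c+27) = C (C (C (C (32*c+27)))) from rfl, e1, e2, e3, e4] at this
          omega
    · obtain ⟨a, rfl⟩ : ∃ a, n = 8*a+5 := ⟨n/8, by omega⟩
      have e1 : C (8*a+5) = 24*a+16 := by unfold C; split <;> omega
      have e2 : C (24*a+16) = 12*a+8 := by unfold C; split <;> omega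
      have e3 : C (12*a+8) = 6*a+4 := by unfold C; split <;> omega
      have e4 : C (6*a+4) = 3*a+2 := by unfold C; split <;> omega
      refine ⟨4, by norm_num, ?_⟩
      show C (C (C (C (8*a+5)))) < 8*a+5
      rw [e1, e2, e3, e4]; omega
    · exfalso
      obtain ⟨a, rfl⟩ : ∃ a, n = 8*a+7 := ⟨n/8, by omega⟩
      have e1 : C (8*a+7) = 24*a+22 := by unfold C; split <;> omega
      have := h 1
      rw [show C^[1] (8*a+7) = C (8*a+7) from rfl, e1] at this
      omega

theorem stmt_13 (n : ℕ) (hn : 1 ≤ n) (h : ∀ k : ℕ, C^[k] n % 8 ≠ 6) :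
    ∃ k : ℕ, C^[k] n = 1 := by
  induction n using Nat.strong_induction_on with
  | _ n ih =>
    rcases eq_or_lt_of_le hn with h1 | h1
    · exact ⟨0, h1.symm⟩
    · obtain ⟨j, hj, hlt⟩ := key n h1 h
      obtain ⟨k, hk⟩ := ih (C^[j] n) hlt (Cpos_iter j hn)
        (fun k => by rw [← Function.iterate_add_apply]; exact h (k + j))
      exact ⟨k + j, by rw [Function.iterate_add_apply, hk]⟩
end
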